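/- The sets W(r,t,i) form a basis for a topology on D = Λ × {1,−1}: if (t,k) ∈ W(r₁,u₁,i₁) ∩ W(r₂,u₂,i₂) for two such basic sets, then there exists r ∈ Λ ∪ {0} with r ≺ t such that W(r,t,k) ⊆ W(r₁,u₁,i₁) ∩ W(r₂,u₂,i₂). -/

import Mathlib

/-- An element of Kurepa's tree `Λ`: an injective function `t : α → ω` with countable
ordinal domain `α` and coinfinite range.  The function is represented as a total function
on ordinals which takes the junk value `0` outside of the domain. -/
structure Lambda : Type 1 where
  toFun : Ordinal.{0} → ℕ
  dom : Ordinal.{0}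
  countable : dom.card ≤ Cardinal.aleph0
  inj : ∀ β γ, β < dom → γ < dom → toFun β = toFun γ → β = γ
  coinfinite : {n : ℕ | ∀ β, β < dom → toFun β ≠ n}.Infinite
  junk : ∀ β, ¬ β < dom → toFun β = 0

/-- The tree order on `Λ`: `s ≼ t` iff `t` extends `s`. -/
def Lambda.le (s t : Lambda) : Prop :=
  s.dom ≤ t.dom ∧ ∀ β, β < s.dom → s.toFun β = t.toFun β

/-- The strict tree order on `Λ`. -/
def Lambda.lt (s t : Lambda) : Prop := Lambda.le s t ∧ s ≠ t

/-- `r ≺ s` for `r ∈ Λ ∪ {0}` (`none` plays the role of the extra least element `0`). -/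
def precLt : Option Lambda → Lambda → Prop
  | none, _ => True
  | some r, s => Lambda.lt r s

/-- The interval `(r, t] = {s ∈ Λ : r ≺ s ≼ t}`, with `r ∈ Λ ∪ {0}`. -/
def lamIoc (r : Option Lambda) (t : Lambda) : Set Lambda :=
  {s | precLt r s ∧ Lambda.le s t}

/-- The position of the minimum of `t` on the ordinal interval `[δ, β)`. -/
noncomputable def minPos (t : Ordinal.{0} → ℕ) (δ β : Ordinal.{0}) : Ordinal.{0} :=
  sInf {ξ | δ ≤ ξ ∧ ξ < β ∧ ∀ η, δ ≤ η → η < β → t ξ ≤ t η}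

lemma minPos_lt (t : Ordinal.{0} → ℕ) {δ β : Ordinal.{0}} (h : δ < β) : minPos t δ β < β := by
  have hne : {ξ : Ordinal.{0} | δ ≤ ξ ∧ ξ < β ∧ ∀ η, δ ≤ η → η < β → t ξ ≤ t η}.Nonempty := by
    have h1 : {n : ℕ | ∃ ξ : Ordinal.{0}, δ ≤ ξ ∧ ξ < β ∧ t ξ = n}.Nonempty :=
      ⟨t δ, δ, le_refl _, h, rfl⟩
    obtain ⟨ξ, hξ1, hξ2, hξ3⟩ := Nat.sInf_mem h1
    refine ⟨ξ, hξ1, hξ2, fun η h1' h2' => ?_⟩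
    rw [hξ3]
    exact Nat.sInf_le ⟨η, h1', h2', rfl⟩
  obtain ⟨ξ, hξ⟩ := hne
  calc minPos t δ β ≤ ξ := csInf_le (OrderBot.bddBelow _) hξ
    _ < β := hξ.2.1

/-- The sequence `τ` computed from the starting ordinal `β₀` downwards: `τ` is obtained by
repeatedly passing from `β` to the position of the minimum of `t` on `[δ, β)`, stopping upon
reaching `δ`.  The resulting finite sequence `(β_k, …, β_1)` is recorded as a list in the
order `[β_k, …, β_1]` (so concatenation of the lists corresponds to `⌢`). -/
noncomputable def tauFrom (δ : Ordinal.{0}) (t : Ordinal.{0} → ℕ) : Ordinal.{0} → List Ordinal.{0} :=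
  WellFounded.fix wellFounded_lt
    (fun β IH => if h : δ < β then IH (minPos t δ β) (minPos_lt t h) ++ [minPos t δ β] else [])

/-- The finite sequence `τ(s,t)` of ordinals, for `s ≼ t` in `Λ`. -/
noncomputable def tau (s t : Lambda) : List Ordinal.{0} :=
  tauFrom s.dom t.toFun t.dom

/-- `ℓ(s,t)`, the length of `τ(s,t)`. -/
noncomputable def ell (s t : Lambda) : ℕ := (tau s t).length

/-- The underlying set of the `Λ`-duplicate: `D = Λ × {1, -1}`. -/
abbrev Dup : Type 1 := Lambda × ℤˣ

/-- The basic open sets `W(r,t,i)` of the `Λ`-duplicate. -/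
noncomputable def Wset (r : Option Lambda) (t : Lambda) (i : ℤˣ) : Set Dup :=
  {q | q.1 ∈ lamIoc r t ∧ q.2 = (-1) ^ ell q.1 t * i}

/-- The collection of all basic open sets `W(r,t,i)` with `r ≺ t`. -/
noncomputable def WBasis : Set (Set Dup) :=
  {S | ∃ (r : Option Lambda) (t : Lambda) (i : ℤˣ), precLt r t ∧ S = Wset r t i}

/-- The topology of the `Λ`-duplicate, generated by the basic sets `W(r,t,i)`. -/
noncomputable instance : TopologicalSpace Dup := TopologicalSpace.generateFrom WBasis

/-!
Fix `(t, k)` in a basic set `W(r, u, i)`. Every value of `u` along `τ(t, u)` is at most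
`u(dom t)`, and since `t` is injective into `ω`, only finitely many `ξ < dom t` have
`t(ξ) ≤ u(dom t)`. So for every `s ≼ t` with `dom s` close enough to `dom t`, the values of `t` on
`[dom s, dom t)` exceed all values met along `τ(t, u)`: the minimum-position recursion computing
`τ(s, u)` first walks down `τ(t, u)` and then continues as `τ(s, t)`. Hence
`ℓ(s, u) = ℓ(s, t) + ℓ(t, u)`, and the sign condition of `W(r, u, i)` at `s` follows from the one
at `t`. Restricting `t` to an ordinal beyond the thresholds of two basic sets gives the required
`r` (when `dom t = 0`, `W(0, t, k)` is the singleton `{(t, k)}`).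
-/

section MinPos

variable (f g : Ordinal.{0} → ℕ) {δ δ' β : Ordinal.{0}}

lemma minPos_spec (h : δ < β) :
    δ ≤ minPos f δ β ∧ minPos f δ β < β ∧ ∀ η, δ ≤ η → η < β → f (minPos f δ β) ≤ f η := by
  obtain ⟨ξ, ⟨hδξ, hξβ⟩, hmin⟩ :=
    (InvImage.wf f wellFounded_lt).has_min (Set.Ico δ β) ⟨δ, le_rfl, h⟩
  exact csInf_mem (s := {ξ | δ ≤ ξ ∧ ξ < β ∧ ∀ η, δ ≤ η → η < β → f ξ ≤ f η})
    ⟨ξ, hδξ, hξβ, fun η hδη hηβ => not_lt.1 (hmin η ⟨hδη, hηβ⟩)⟩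

lemma minPos_congr (hfg : ∀ ξ, δ ≤ ξ → ξ < β → f ξ = g ξ) : minPos f δ β = minPos g δ β := by
  unfold minPos
  congr 1
  ext ξ
  refine and_congr_right fun hδξ => and_congr_right fun hξβ => forall_congr' fun η => ?_
  refine imp_congr_right fun hδη => imp_congr_right fun hηβ => ?_
  rw [hfg ξ hδξ hξβ, hfg η hδη hηβ]

lemma minPos_eq_of_lt_apply (hδ : δ ≤ δ') (hβ : δ' < β)
    (hlt : ∀ ξ, δ ≤ ξ → ξ < δ' → f (minPos f δ' β) < f ξ) : minPos f δ β = minPos f δ' β := by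
  obtain ⟨hm₁, hm₂, hm_min⟩ := minPos_spec f hβ
  unfold minPos
  congr 1
  ext ξ
  constructor
  · rintro ⟨hδξ, hξβ, hξ_min⟩
    have hδ'ξ : δ' ≤ ξ := not_lt.1 fun hξ =>
      (hξ_min _ (hδ.trans hm₁) hm₂).not_gt (hlt ξ hδξ hξ)
    exact ⟨hδ'ξ, hξβ, fun η hη₁ hη₂ => hξ_min η (hδ.trans hη₁) hη₂⟩
  · rintro ⟨hδ'ξ, hξβ, hξ_min⟩
    refine ⟨hδ.trans hδ'ξ, hξβ, fun η hη₁ hη₂ => ?_⟩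
    rcases lt_or_ge η δ' with hη | hη
    · exact (hξ_min _ hm₁ hm₂).trans (hlt η hη₁ hη).le
    · exact hξ_min η hη hη₂

end MinPos

section TauFrom

variable {f g : Ordinal.{0} → ℕ} {δ δ' β : Ordinal.{0}}

lemma tauFrom_of_lt (h : δ < β) :
    tauFrom δ f β = tauFrom δ f (minPos f δ β) ++ [minPos f δ β] := by
  rw [tauFrom, WellFounded.fix_eq, dif_pos h]

lemma tauFrom_of_le (h : β ≤ δ) : tauFrom δ f β = [] := by
  rw [tauFrom, WellFounded.fix_eq, dif_neg h.not_gt]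

lemma tauFrom_congr (β : Ordinal.{0}) (hfg : ∀ ξ, δ ≤ ξ → ξ < β → f ξ = g ξ) :
    tauFrom δ f β = tauFrom δ g β := by
  induction β using WellFoundedLT.induction with
  | _ β IH =>
  rcases lt_or_ge δ β with h | h
  · have hm := minPos_congr f g hfg
    rw [tauFrom_of_lt h, tauFrom_of_lt h, hm,
      IH _ (minPos_lt g h) fun ξ hδξ hξ => hfg ξ hδξ (hξ.trans (minPos_lt g h))]
  · rw [tauFrom_of_le h, tauFrom_of_le h]

lemma apply_le_of_mem_tauFrom (β : Ordinal.{0}) : ∀ m ∈ tauFrom δ f β, f m ≤ f δ := by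
  induction β using WellFoundedLT.induction with
  | _ β IH =>
  rcases lt_or_ge δ β with h | h
  · rw [tauFrom_of_lt h]
    intro m hm
    rcases List.mem_append.1 hm with hm | hm
    · exact IH _ (minPos_lt f h) m hm
    · obtain ⟨-, -, hmin⟩ := minPos_spec f h
      exact List.mem_singleton.1 hm ▸ hmin δ le_rfl h
  · simp [tauFrom_of_le h]

lemma tauFrom_append (hδ : δ ≤ δ') (β : Ordinal.{0}) (hβ : δ' ≤ β)
    (hlt : ∀ m ∈ tauFrom δ' f β, ∀ ξ, δ ≤ ξ → ξ < δ' → f m < f ξ) :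
    tauFrom δ f β = tauFrom δ f δ' ++ tauFrom δ' f β := by
  induction β using WellFoundedLT.induction with
  | _ β IH =>
  rcases hβ.eq_or_lt with rfl | hδ'β
  · rw [tauFrom_of_le le_rfl, List.append_nil]
  · rw [tauFrom_of_lt hδ'β] at hlt ⊢
    have hm : minPos f δ β = minPos f δ' β :=
      minPos_eq_of_lt_apply f hδ hδ'β (hlt _ (by simp))
    rw [tauFrom_of_lt (hδ.trans_lt hδ'β), hm,
      IH _ (minPos_lt f hδ'β) (minPos_spec f hδ'β).1 fun m hm => hlt m (by simp [hm]),
      List.append_assoc]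

end TauFrom

namespace Lambda

lemma ext {s t : Lambda} (hf : s.toFun = t.toFun) (hd : s.dom = t.dom) : s = t := by
  cases s; cases t; simp_all

lemma le_refl (t : Lambda) : t.le t := ⟨le_rfl, fun _ _ => rfl⟩

lemma le_trans {s t u : Lambda} (hst : s.le t) (htu : t.le u) : s.le u :=
  ⟨hst.1.trans htu.1, fun β hβ => (hst.2 β hβ).trans (htu.2 β (hβ.trans_le hst.1))⟩

lemma eq_of_le_of_dom_eq {s t : Lambda} (h : s.le t) (hd : s.dom = t.dom) : s = t := by
  refine ext (funext fun β => ?_) hd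
  by_cases hβ : β < s.dom
  · exact h.2 β hβ
  · rw [s.junk β hβ, t.junk β (hd ▸ hβ)]

lemma dom_lt_of_lt {s t : Lambda} (h : s.lt t) : s.dom < t.dom :=
  h.1.1.lt_of_ne fun hd => h.2 (eq_of_le_of_dom_eq h.1 hd)

lemma lt_of_le_of_le_of_dom_lt {r s t : Lambda} (hr : r.le t) (hs : s.le t)
    (hdom : r.dom < s.dom) : r.lt s :=
  ⟨⟨hdom.le, fun β hβ => (hr.2 β hβ).trans (hs.2 β (hβ.trans hdom)).symm⟩,
    fun h => (h ▸ hdom).false⟩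

lemma exists_lt_dom_forall_lt_toFun (t : Lambda) {δ : Ordinal.{0}} (hδ : δ < t.dom) (N : ℕ) :
    ∃ γ, δ ≤ γ ∧ γ < t.dom ∧ ∀ ξ, γ < ξ → ξ < t.dom → N < t.toFun ξ := by
  set A := insert δ {ξ | ξ < t.dom ∧ t.toFun ξ ≤ N}
  have hA : A.Finite := by
    refine Set.Finite.insert _ (Set.Finite.of_finite_image (f := t.toFun) ?_ ?_)
    · exact (Set.finite_Iic N).subset (Set.image_subset_iff.2 fun ξ hξ => hξ.2)
    · exact fun ξ hξ η hη => t.inj ξ η hξ.1 hη.1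
  refine ⟨sSup A, le_csSup hA.bddAbove (Set.mem_insert _ _),
    (hA.csSup_lt_iff (Set.insert_nonempty _ _)).2 ?_, fun ξ hγξ hξ => ?_⟩
  · rintro ξ (rfl | hξ)
    exacts [hδ, hξ.1]
  · by_contra! hle
    exact hγξ.not_ge (le_csSup hA.bddAbove (Set.mem_insert_of_mem _ ⟨hξ, hle⟩))

noncomputable def restrict (t : Lambda) (γ : Ordinal.{0}) (hγ : γ ≤ t.dom) : Lambda where
  toFun ξ := if ξ < γ then t.toFun ξ else 0
  dom := γ
  countable := (Ordinal.card_le_card hγ).trans t.countable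
  inj β ξ hβ hξ h := t.inj β ξ (hβ.trans_le hγ) (hξ.trans_le hγ)
    (by simpa only [if_pos hβ, if_pos hξ] using h)
  coinfinite := t.coinfinite.mono
    fun n hn β hβ => by simpa only [if_pos hβ] using hn β (hβ.trans_le hγ)
  junk β h := if_neg h

lemma restrict_lt (t : Lambda) {γ : Ordinal.{0}} (hγ : γ < t.dom) : (t.restrict γ hγ.le).lt t :=
  ⟨⟨hγ.le, fun _ hβ => if_pos hβ⟩, fun h => hγ.ne (congrArg dom h)⟩

end Lambda

lemma exists_lt_dom_forall_precLt {r : Option Lambda} {t : Lambda} (hr : precLt r t)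
    (ht : 0 < t.dom) : ∃ δ < t.dom, ∀ s, s.le t → δ < s.dom → precLt r s := by
  cases r with
  | none => exact ⟨0, ht, fun _ _ _ => trivial⟩
  | some r =>
    exact ⟨r.dom, Lambda.dom_lt_of_lt hr, fun s hs hδ => Lambda.lt_of_le_of_le_of_dom_lt hr.1 hs hδ⟩

lemma ell_self (t : Lambda) : ell t t = 0 := by
  rw [ell, tau, tauFrom_of_le le_rfl, List.length_nil]

lemma tau_append {s t u : Lambda} (hst : s.le t) (htu : t.le u)
    (hlt : ∀ ξ, s.dom ≤ ξ → ξ < t.dom → u.toFun t.dom < t.toFun ξ) :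
    tau s u = tau s t ++ tau t u := by
  have hsplit := tauFrom_append hst.1 u.dom htu.1 fun m hm ξ hsξ hξt =>
    (apply_le_of_mem_tauFrom u.dom m hm).trans_lt ((hlt ξ hsξ hξt).trans_eq (htu.2 ξ hξt))
  rw [tau, hsplit, tauFrom_congr t.dom fun ξ _ hξ => (htu.2 ξ hξ).symm]
  rfl

lemma mem_Wset_self {r : Option Lambda} {t : Lambda} (hr : precLt r t) (k : ℤˣ) :
    (t, k) ∈ Wset r t k :=
  ⟨⟨hr, t.le_refl⟩, by rw [ell_self, pow_zero, one_mul]⟩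

lemma Wset_none_of_dom_eq_zero {t : Lambda} (ht : t.dom = 0) (k : ℤˣ) :
    Wset none t k = {(t, k)} := by
  refine Set.Subset.antisymm ?_ (Set.singleton_subset_iff.2 (mem_Wset_self (r := none) trivial k))
  rintro ⟨s, j⟩ ⟨⟨-, hst⟩, hj⟩
  obtain rfl : s = t := Lambda.eq_of_le_of_dom_eq hst (nonpos_iff_eq_zero.1 (ht ▸ hst.1) ▸ ht.symm)
  replace hj : j = (-1) ^ ell s s * k := hj
  rw [hj, ell_self, pow_zero, one_mul]
  rfl

lemma exists_forall_mem_Wset {t u : Lambda} {r : Option Lambda} {k i : ℤˣ} (ht : 0 < t.dom)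
    (hmem : (t, k) ∈ Wset r u i) :
    ∃ γ < t.dom, ∀ s, s.le t → γ < s.dom → (s, (-1) ^ ell s t * k) ∈ Wset r u i := by
  obtain ⟨⟨hrt, htu⟩, hk⟩ := hmem
  obtain ⟨δ, hδ, hr⟩ := exists_lt_dom_forall_precLt hrt ht
  obtain ⟨γ, hδγ, hγ, hval⟩ := t.exists_lt_dom_forall_lt_toFun hδ (u.toFun t.dom)
  refine ⟨γ, hγ, fun s hst hs => ⟨⟨hr s hst (hδγ.trans_lt hs), Lambda.le_trans hst htu⟩, ?_⟩⟩
  have hell : ell s u = ell s t + ell t u := by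
    rw [ell, ell, ell, tau_append hst htu fun ξ hsξ hξ => hval ξ (hs.trans_le hsξ) hξ,
      List.length_append]
  replace hk : k = (-1) ^ ell t u * i := hk
  show (-1) ^ ell s t * k = (-1) ^ ell s u * i
  rw [hell, pow_add, hk, mul_assoc]

lemma exists_Wset_subset_inter {t : Lambda} {k : ℤˣ} {r₁ r₂ : Option Lambda} {u₁ u₂ : Lambda}
    {i₁ i₂ : ℤˣ} (hmem : (t, k) ∈ Wset r₁ u₁ i₁ ∩ Wset r₂ u₂ i₂) :
    ∃ r : Option Lambda, precLt r t ∧ Wset r t k ⊆ Wset r₁ u₁ i₁ ∩ Wset r₂ u₂ i₂ := by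
  rcases eq_zero_or_pos t.dom with ht | ht
  · exact ⟨none, trivial, Wset_none_of_dom_eq_zero ht k ▸ Set.singleton_subset_iff.2 hmem⟩
  obtain ⟨γ₁, hγ₁, h₁⟩ := exists_forall_mem_Wset ht hmem.1
  obtain ⟨γ₂, hγ₂, h₂⟩ := exists_forall_mem_Wset ht hmem.2
  have hγ : max γ₁ γ₂ < t.dom := max_lt hγ₁ hγ₂
  refine ⟨some (t.restrict _ hγ.le), t.restrict_lt hγ, ?_⟩
  rintro ⟨s, j⟩ ⟨⟨hrs, hst⟩, hj⟩
  obtain rfl : j = (-1) ^ ell s t * k := hj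
  have hs : max γ₁ γ₂ < s.dom := Lambda.dom_lt_of_lt hrs
  exact ⟨h₁ s hst ((le_max_left _ _).trans_lt hs), h₂ s hst ((le_max_right _ _).trans_lt hs)⟩

/-- The sets `W(r,t,i)` form a basis for a topology on `D = Λ × {1,-1}`: explicitly, if
`(t,k) ∈ W(r₁,u₁,i₁) ∩ W(r₂,u₂,i₂)` then there is `r ≺ t` with
`W(r,t,k) ⊆ W(r₁,u₁,i₁) ∩ W(r₂,u₂,i₂)`. -/
theorem Wsets_form_basis :
    TopologicalSpace.IsTopologicalBasis WBasis ∧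
    ∀ (t : Lambda) (k : ℤˣ) (r₁ : Option Lambda) (u₁ : Lambda) (i₁ : ℤˣ)
      (r₂ : Option Lambda) (u₂ : Lambda) (i₂ : ℤˣ),
      precLt r₁ u₁ → precLt r₂ u₂ →
      (t, k) ∈ Wset r₁ u₁ i₁ ∩ Wset r₂ u₂ i₂ →
      ∃ r : Option Lambda, precLt r t ∧ Wset r t k ⊆ Wset r₁ u₁ i₁ ∩ Wset r₂ u₂ i₂ := by
  refine ⟨⟨?_, ?_, rfl⟩, fun _ _ _ _ _ _ _ _ _ _ => exists_Wset_subset_inter⟩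
  · rintro _ ⟨r₁, u₁, i₁, -, rfl⟩ _ ⟨r₂, u₂, i₂, -, rfl⟩ ⟨t, k⟩ hmem
    obtain ⟨r, hr, hsub⟩ := exists_Wset_subset_inter hmem
    exact ⟨_, ⟨r, t, k, hr, rfl⟩, mem_Wset_self hr k, hsub⟩
  · exact Set.sUnion_eq_univ_iff.2 fun ⟨t, k⟩ =>
      ⟨_, ⟨none, t, k, trivial, rfl⟩, mem_Wset_self (r := none) trivial k⟩
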